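/- Under the multilayered sample selection model, suppose P(AE) > 0. Then the total effect E[Y_{1,D_1} − Y_{0,D_0} | AE] decomposes as E[Y_{1,D_1} − Y_{0,D_0} | AE] = Σ_{d=1}^{K} Σ_{d'=1}^{K} LCDE(d | (d',d)) · P(T=(d',d) | AE) + Σ_{d=1}^{K} Σ_{d'=1, d'≠d}^{K} LCIE(0, d, d' | (d',d)) · P(T=(d',d) | AE), where any summand whose response-type probability P(T=(d',d)) is zero is interpreted as zero; equivalently, the first sum equals E[Y_{1,D_1} − Y_{0,D_1} | AE] and the second sum equals E[Y_{0,D_1} − Y_{0,D_0} | AE]. -/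

import Mathlib

/-! On the always-employed event the response types `(d', d)`, `1 ≤ d, d' ≤ K`, form a finite
measurable partition, and on the cell `T = (d', d)` one has
`Y_{1,D_1} - Y_{0,D_1} = Y_{1,d} - Y_{0,d}` and `Y_{0,D_1} - Y_{0,D_0} = Y_{0,d} - Y_{0,d'}`.
The law of total expectation over this partition turns the two conditional means into the
weighted sums of LCDEs and LCIEs, and the total effect is their sum by linearity. -/

open MeasureTheory ProbabilityTheory

/-- `Y_{z,D_{z'}}(ω) = Σ_{d=1}^K Y_{z,d}(ω) · 1{D_{z'}(ω) = d}`. -/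
noncomputable def YzD {Ω : Type*} (K : ℕ) (Y : ℕ → ℕ → Ω → ℝ) (z : ℕ) (Dz' : Ω → ℕ)
    (ω : Ω) : ℝ :=
  ∑ d ∈ Finset.Icc 1 K, Y z d ω * (if Dz' ω = d then 1 else 0)

open Finset

namespace ProbabilityTheory

variable {Ω ι : Type*} [MeasurableSpace Ω] {μ : Measure Ω} {s t : Set Ω} {f g : Ω → ℝ}

lemma integral_cond_eq_inv_mul_setIntegral (μ : Measure Ω) (s : Set Ω) (f : Ω → ℝ) :
    ∫ x, f x ∂μ[|s] = (μ s).toReal⁻¹ * ∫ x in s, f x ∂μ := by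
  rw [cond, integral_smul_measure, ENNReal.toReal_inv, smul_eq_mul]

lemma _root_.MeasureTheory.Integrable.cond (hf : Integrable f μ) (s : Set Ω) :
    Integrable f μ[|s] := by
  by_cases hs : μ s = 0
  · simp [cond_eq_zero_of_meas_eq_zero hs]
  · exact hf.restrict.smul_measure (ENNReal.inv_ne_top.mpr hs)

lemma integral_cond_congr (hs : MeasurableSet s) (hfg : Set.EqOn f g s) :
    ∫ x, f x ∂μ[|s] = ∫ x, g x ∂μ[|s] := by
  rw [integral_cond_eq_inv_mul_setIntegral, integral_cond_eq_inv_mul_setIntegral,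
    setIntegral_congr_fun hs hfg]

lemma integral_cond_mul_cond_toReal [IsFiniteMeasure μ] (ht : MeasurableSet t) (hst : s ⊆ t)
    (f : Ω → ℝ) :
    (∫ x, f x ∂μ[|s]) * (μ[s|t]).toReal = (μ t).toReal⁻¹ * ∫ x in s, f x ∂μ := by
  rw [integral_cond_eq_inv_mul_setIntegral, cond_apply ht, Set.inter_eq_right.mpr hst,
    ENNReal.toReal_mul, ENNReal.toReal_inv]
  by_cases hs : μ s = 0
  · simp [Measure.restrict_eq_zero.mpr hs]
  · have : (μ s).toReal ≠ 0 := ENNReal.toReal_ne_zero.mpr ⟨hs, measure_ne_top μ s⟩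
    field_simp

theorem sum_integral_cond_mul_cond_toReal [IsFiniteMeasure μ] {I : Finset ι} {S : ι → Set Ω}
    (hS : ∀ i ∈ I, MeasurableSet (S i)) (hdisj : (I : Set ι).PairwiseDisjoint S)
    (hf : Integrable f μ) :
    ∑ i ∈ I, (∫ x, f x ∂μ[|S i]) * (μ[S i|⋃ i ∈ I, S i]).toReal
      = ∫ x, f x ∂μ[|⋃ i ∈ I, S i] := by
  have hU : MeasurableSet (⋃ i ∈ I, S i) := I.measurableSet_biUnion hS
  rw [sum_congr rfl fun i hi =>
      integral_cond_mul_cond_toReal hU (Set.subset_biUnion_of_mem (u := S) hi) f,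
    ← mul_sum, ← integral_biUnion_finset I hS hdisj fun i _ => hf.integrableOn,
    integral_cond_eq_inv_mul_setIntegral]

end ProbabilityTheory

section SampleSelection

variable {Ω : Type*} {K : ℕ} {Y : ℕ → ℕ → Ω → ℝ} {D D0 D1 : Ω → ℕ}

lemma YzD_eq_of_eq {z d : ℕ} (hd : d ∈ Icc 1 K) {ω : Ω} (hω : D ω = d) :
    YzD K Y z D ω = Y z d ω := by
  rw [YzD, sum_eq_single_of_mem d hd fun e _ he => by simp [hω, Ne.symm he]]
  simp [hω]

lemma biUnion_responseType_eq (hD0 : ∀ ω, D0 ω ≤ K) (hD1 : ∀ ω, D1 ω ≤ K) :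
    ⋃ p ∈ Icc 1 K ×ˢ Icc 1 K, {ω | D0 ω = p.2 ∧ D1 ω = p.1} = {ω | 0 < D0 ω ∧ 0 < D1 ω} := by
  ext ω
  simp only [Set.mem_iUnion, mem_product, mem_Icc, Set.mem_ofPred_eq, exists_prop, Prod.exists]
  constructor
  · rintro ⟨d, d', ⟨⟨hd, -⟩, hd', -⟩, rfl, rfl⟩
    exact ⟨hd', hd⟩
  · rintro ⟨h0, h1⟩
    exact ⟨D1 ω, D0 ω, ⟨⟨h1, hD1 ω⟩, h0, hD0 ω⟩, rfl, rfl⟩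

lemma pairwiseDisjoint_responseType (s : Set (ℕ × ℕ)) :
    s.PairwiseDisjoint fun p => {ω | D0 ω = p.2 ∧ D1 ω = p.1} := by
  rintro p - q - hpq
  refine Set.disjoint_left.mpr fun ω ⟨h0, h1⟩ ⟨h0', h1'⟩ => hpq ?_
  exact Prod.ext (h1 ▸ h1') (h0 ▸ h0')

variable [MeasurableSpace Ω] {μ : Measure Ω}

lemma integrable_YzD {z : ℕ} (hY : ∀ d, 1 ≤ d → d ≤ K → Integrable (Y z d) μ)
    (hD : Measurable D) : Integrable (YzD K Y z D) μ := by
  refine integrable_finsetSum _ fun d hd => ?_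
  have hind :
      (fun ω => Y z d ω * if D ω = d then 1 else 0) = {ω | D ω = d}.indicator (Y z d) := by
    ext ω
    by_cases h : D ω = d <;> simp [h]
  rw [hind]
  rw [mem_Icc] at hd
  exact (hY d hd.1 hd.2).indicator (hD (measurableSet_singleton d))

lemma sum_responseType_integral_cond [IsFiniteMeasure μ] (hD0m : Measurable D0)
    (hD1m : Measurable D1) (hD0 : ∀ ω, D0 ω ≤ K) (hD1 : ∀ ω, D1 ω ≤ K) {g : Ω → ℝ}
    (hg : Integrable g μ) {h : ℕ → ℕ → Ω → ℝ}
    (hh : ∀ d ∈ Icc 1 K, ∀ d' ∈ Icc 1 K, Set.EqOn (h d d') g {ω | D0 ω = d' ∧ D1 ω = d}) :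
    ∑ d ∈ Icc 1 K, ∑ d' ∈ Icc 1 K,
        (∫ ω, h d d' ω ∂μ[|{ω | D0 ω = d' ∧ D1 ω = d}])
          * (μ[{ω | D0 ω = d' ∧ D1 ω = d}|{ω | 0 < D0 ω ∧ 0 < D1 ω}]).toReal
      = ∫ ω, g ω ∂μ[|{ω | 0 < D0 ω ∧ 0 < D1 ω}] := by
  have hcell (d d' : ℕ) : MeasurableSet {ω | D0 ω = d' ∧ D1 ω = d} :=
    (hD0m (measurableSet_singleton d')).inter (hD1m (measurableSet_singleton d))
  rw [← biUnion_responseType_eq hD0 hD1, ← sum_integral_cond_mul_cond_toReal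
    (fun p _ => hcell p.1 p.2) (pairwiseDisjoint_responseType _) hg, ← sum_product']
  refine sum_congr rfl fun p hp => ?_
  rw [mem_product] at hp
  rw [integral_cond_congr (hcell p.1 p.2) (hh p.1 hp.1 p.2 hp.2)]

end SampleSelection

/-- A response type with `P(T = (d', d)) = 0` contributes zero: `P[|·]` of a null set is the
zero measure. -/
theorem decomposition_of_total_effect
    {Ω : Type*} [MeasurableSpace Ω] (P : Measure Ω) [IsProbabilityMeasure P]
    (K : ℕ)
    (D0 D1 : Ω → ℕ)
    (hD0m : Measurable D0) (hD1m : Measurable D1)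
    (hD0K : ∀ ω, D0 ω ≤ K) (hD1K : ∀ ω, D1 ω ≤ K)
    (Y : ℕ → ℕ → Ω → ℝ)
    (hYint : ∀ z ≤ 1, ∀ d, 1 ≤ d → d ≤ K → Integrable (Y z d) P) :
    (∫ ω, (YzD K Y 1 D1 ω - YzD K Y 0 D0 ω) ∂(P[|{ω | 0 < D0 ω ∧ 0 < D1 ω}])
      = (∑ d ∈ Finset.Icc 1 K, ∑ d' ∈ Finset.Icc 1 K,
          (∫ ω, (Y 1 d ω - Y 0 d ω) ∂(P[|{ω | D0 ω = d' ∧ D1 ω = d}]))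
            * ((P[|{ω | 0 < D0 ω ∧ 0 < D1 ω}]) {ω | D0 ω = d' ∧ D1 ω = d}).toReal)
        + (∑ d ∈ Finset.Icc 1 K, ∑ d' ∈ (Finset.Icc 1 K).erase d,
          (∫ ω, (Y 0 d ω - Y 0 d' ω) ∂(P[|{ω | D0 ω = d' ∧ D1 ω = d}]))
            * ((P[|{ω | 0 < D0 ω ∧ 0 < D1 ω}]) {ω | D0 ω = d' ∧ D1 ω = d}).toReal))
    ∧ ((∑ d ∈ Finset.Icc 1 K, ∑ d' ∈ Finset.Icc 1 K,
          (∫ ω, (Y 1 d ω - Y 0 d ω) ∂(P[|{ω | D0 ω = d' ∧ D1 ω = d}]))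
            * ((P[|{ω | 0 < D0 ω ∧ 0 < D1 ω}]) {ω | D0 ω = d' ∧ D1 ω = d}).toReal)
        = ∫ ω, (YzD K Y 1 D1 ω - YzD K Y 0 D1 ω) ∂(P[|{ω | 0 < D0 ω ∧ 0 < D1 ω}]))
    ∧ ((∑ d ∈ Finset.Icc 1 K, ∑ d' ∈ (Finset.Icc 1 K).erase d,
          (∫ ω, (Y 0 d ω - Y 0 d' ω) ∂(P[|{ω | D0 ω = d' ∧ D1 ω = d}]))
            * ((P[|{ω | 0 < D0 ω ∧ 0 < D1 ω}]) {ω | D0 ω = d' ∧ D1 ω = d}).toReal)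
        = ∫ ω, (YzD K Y 0 D1 ω - YzD K Y 0 D0 ω) ∂(P[|{ω | 0 < D0 ω ∧ 0 < D1 ω}])) := by
  have h1D1 := integrable_YzD (hYint 1 le_rfl) hD1m
  have h0D1 := integrable_YzD (hYint 0 zero_le_one) hD1m
  have h0D0 := integrable_YzD (hYint 0 zero_le_one) hD0m
  have lcde := sum_responseType_integral_cond (μ := P) hD0m hD1m hD0K hD1K (h1D1.sub h0D1)
    (h := fun d _ ω => Y 1 d ω - Y 0 d ω) fun d hd d' _ ω hω => by
      simp only [Pi.sub_apply, YzD_eq_of_eq hd hω.2]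
  have lcie := sum_responseType_integral_cond (μ := P) hD0m hD1m hD0K hD1K (h0D1.sub h0D0)
    (h := fun d d' ω => Y 0 d ω - Y 0 d' ω) fun d hd d' hd' ω hω => by
      simp only [Pi.sub_apply, YzD_eq_of_eq hd hω.2, YzD_eq_of_eq hd' hω.1]
  -- the omitted `d' = d` cell contributes `∫ (Y 0 d - Y 0 d) = 0`
  rw [← sum_congr rfl fun d _ => sum_erase (a := d) _ (by simp)] at lcie
  refine ⟨?_, lcde, lcie⟩
  rw [lcde, lcie, ← integral_add ((h1D1.sub h0D1).cond _) ((h0D1.sub h0D0).cond _)]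
  simp only [Pi.sub_apply, sub_add_sub_cancel]
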